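/- In ℚ(q)[X], for r ≥ m ≥ 0, s ≥ m, and max(r,s) ≤ j ≤ r+s−m, the coefficient c_{r,s}^{m,j} := θ_{r+s−j}(q^r)·θ_{r+s−j}(q^s) / (q^{(r+s−j−m)m}·θ_{r+s−j−m}(q^{r+s−j−m})·θ_m(q^r)·θ_m(q^s)) satisfies θ_r(X)·θ_s(X) = θ_m(X)·Σ_{j=max(r,s)}^{r+s−m} c_{r,s}^{m,j}·θ_j(X), where θ_n(X) = ∏_{k=0}^{n-1}(X − q^k). -/

import Mathlib

/-!
Since `θ_{m+n} = θ_m · ∏_{k<n} (X - q^m q^k)`, the theorem is the case `c = q^m` of an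
expansion for the polynomials `θ^c_n = ∏_{k<n} (X - c q^k)` with scaled nodes:
`θ^c_r θ^c_s = Σ_n c^n θ_n(q^r) θ_n(q^s) / θ_n(q^n) · θ^c_{r+s-n}`.
It follows by induction on `s`, writing `X - c q^s = (X - c q^N) + c (q^N - q^s)`; the
coefficients then satisfy a `q`-Pascal recursion.
-/

open Polynomial Finset

/-- `θ_n(X) = ∏_{k=0}^{n-1} (X - q^k)` as a polynomial. -/
noncomputable def theta {K : Type*} [Field K] (q : K) (n : ℕ) : Polynomial K :=
  ∏ k ∈ range n, (X - C (q ^ k))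

/-- `θ_n(x) = ∏_{k=0}^{n-1} (x - q^k)`. -/
noncomputable def thetaEval {K : Type*} [Field K] (q x : K) (n : ℕ) : K :=
  ∏ k ∈ range n, (x - q ^ k)

theorem Transcendental.pow_injective {R A : Type*} [CommRing R] [Nontrivial R] [Ring A]
    [Algebra R A] {q : A} (hq : Transcendental R q) : Function.Injective (q ^ · : ℕ → A) := by
  intro a b hab
  by_contra hne
  refine hq ⟨X ^ a - X ^ b, sub_ne_zero.2 fun h => hne ?_, by simp [hab]⟩
  simpa using congrArg natDegree h

section

variable {K : Type*} [Field K] {q : K}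

theorem ne_zero_of_injective_pow (hq : Function.Injective (q ^ · : ℕ → K)) : q ≠ 0 :=
  fun h => hq.ne (by norm_num : 1 ≠ 2) (by simp [h])

noncomputable def scaledTheta (q c : K) (n : ℕ) : K[X] :=
  ∏ k ∈ range n, (X - C (c * q ^ k))

theorem theta_add (m n : ℕ) : theta q (m + n) = theta q m * scaledTheta q (q ^ m) n := by
  simp [theta, scaledTheta, prod_range_add, pow_add]

theorem scaledTheta_succ (c : K) (n : ℕ) :
    scaledTheta q c (n + 1) = scaledTheta q c n * (X - C (c * q ^ n)) :=
  prod_range_succ _ _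

theorem scaledTheta_mul_X_sub_C (c : K) (n s : ℕ) :
    scaledTheta q c n * (X - C (c * q ^ s)) =
      scaledTheta q c (n + 1) + C (c * (q ^ n - q ^ s)) * scaledTheta q c n := by
  simp only [scaledTheta_succ, map_mul, map_sub]
  ring

theorem thetaEval_succ (x : K) (n : ℕ) :
    thetaEval q x (n + 1) = thetaEval q x n * (x - q ^ n) :=
  prod_range_succ _ _

theorem thetaEval_pow_succ (t n : ℕ) :
    thetaEval q (q ^ (t + 1)) (n + 1) = (q ^ (t + 1) - 1) * q ^ n * thetaEval q (q ^ t) n := by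
  have h (k : ℕ) : q ^ (t + 1) - q ^ (k + 1) = q * (q ^ t - q ^ k) := by ring
  simp only [thetaEval, prod_range_succ', h, prod_mul_distrib, prod_const, card_range, pow_zero]
  ring

theorem thetaEval_add_pow (m n t : ℕ) :
    thetaEval q (q ^ (m + t)) (m + n) =
      thetaEval q (q ^ (m + t)) m * (q ^ (m * n) * thetaEval q (q ^ t) n) := by
  have h (k : ℕ) : q ^ (m + t) - q ^ (m + k) = q ^ m * (q ^ t - q ^ k) := by ring
  simp only [thetaEval, prod_range_add, h, prod_mul_distrib, prod_const, card_range, pow_mul]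

theorem thetaEval_pow_eq_zero {t n : ℕ} (h : t < n) : thetaEval q (q ^ t) n = 0 :=
  prod_eq_zero (mem_range.2 h) (sub_self _)

theorem thetaEval_pow_ne_zero (hq : Function.Injective (q ^ · : ℕ → K)) {t n : ℕ} (h : n ≤ t) :
    thetaEval q (q ^ t) n ≠ 0 :=
  prod_ne_zero_iff.2 fun k hk => sub_ne_zero.2 <| hq.ne <| by
    have := mem_range.1 hk; omega

/-- The coefficient `c_{r,s}^{0,j}` of the case `m = 0`, indexed by `n = r + s - j`. -/
noncomputable def thetaCoeff (q : K) (r s n : ℕ) : K :=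
  thetaEval q (q ^ r) n * thetaEval q (q ^ s) n / thetaEval q (q ^ n) n

@[simp]
theorem thetaCoeff_zero (r s : ℕ) : thetaCoeff q r s 0 = 1 := by
  simp [thetaCoeff, thetaEval]

theorem thetaCoeff_of_lt_left {r s n : ℕ} (h : r < n) : thetaCoeff q r s n = 0 := by
  simp [thetaCoeff, thetaEval_pow_eq_zero h]

theorem thetaCoeff_of_lt_right {r s n : ℕ} (h : s < n) : thetaCoeff q r s n = 0 := by
  simp [thetaCoeff, thetaEval_pow_eq_zero h]

theorem thetaCoeff_succ_succ (hq : Function.Injective (q ^ · : ℕ → K)) {r s n : ℕ}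
    (hn : n ≤ r + s) :
    thetaCoeff q r (s + 1) (n + 1) =
      thetaCoeff q r s (n + 1) + (q ^ (r + s - n) - q ^ s) * thetaCoeff q r s n := by
  have hq0 : q ≠ 0 := ne_zero_of_injective_pow hq
  have hq1 : q ^ (n + 1) - 1 ≠ 0 := sub_ne_zero.2 (by simpa using hq.ne n.succ_ne_zero)
  have hθ : thetaEval q (q ^ n) n ≠ 0 := thetaEval_pow_ne_zero hq le_rfl
  have hpow : q ^ (r + s - n) * q ^ n = q ^ r * q ^ s := by
    rw [← pow_add, ← pow_add, Nat.sub_add_cancel hn]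
  unfold thetaCoeff
  rw [thetaEval_pow_succ, thetaEval_pow_succ, thetaEval_succ (q ^ r), thetaEval_succ (q ^ s)]
  field_simp
  linear_combination thetaEval q (q ^ r) n * thetaEval q (q ^ s) n * (1 - q ^ (n + 1)) * hpow

theorem scaledTheta_mul_scaledTheta (hq : Function.Injective (q ^ · : ℕ → K)) (c : K)
    (r s : ℕ) :
    scaledTheta q c r * scaledTheta q c s =
      ∑ n ∈ range (s + 1), C (c ^ n * thetaCoeff q r s n) * scaledTheta q c (r + s - n) := by
  induction s with
  | zero => simp [scaledTheta]
  | succ s ih =>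
    set f : ℕ → K[X] := fun n =>
      C (c ^ n * thetaCoeff q r s n) * scaledTheta q c (r + (s + 1) - n)
    set g : ℕ → K[X] := fun n =>
      C (c ^ (n + 1) * ((q ^ (r + s - n) - q ^ s) * thetaCoeff q r s n)) *
        scaledTheta q c (r + s - n)
    have hmul : ∀ n ∈ range (s + 1),
        C (c ^ n * thetaCoeff q r s n) * scaledTheta q c (r + s - n) * (X - C (c * q ^ s)) =
          f n + g n := by
      intro n hn
      have : r + (s + 1) - n = r + s - n + 1 := by have := mem_range.1 hn; omega
      rw [mul_assoc, scaledTheta_mul_X_sub_C]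
      simp only [f, g, this, map_mul, map_sub, map_pow]
      ring
    have hcoeff : ∀ n ∈ range (s + 1),
        C (c ^ (n + 1) * thetaCoeff q r (s + 1) (n + 1)) *
          scaledTheta q c (r + (s + 1) - (n + 1)) = f (n + 1) + g n := by
      intro n hn
      have : r + (s + 1) - (n + 1) = r + s - n := by omega
      simp only [f, g, this,
        thetaCoeff_succ_succ hq (show n ≤ r + s by have := mem_range.1 hn; omega)]
      simp only [mul_add, map_add, add_mul]
    have hf : ∑ n ∈ range (s + 1), f n = ∑ n ∈ range (s + 1), f (n + 1) + f 0 := by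
      rw [← sum_range_succ' f (s + 1), sum_range_succ f (s + 1)]
      simp [f, thetaCoeff_of_lt_right s.lt_succ_self]
    rw [scaledTheta_succ, ← mul_assoc, ih, sum_mul, sum_congr rfl hmul, sum_add_distrib, hf,
      sum_range_succ' _ (s + 1), sum_congr rfl hcoeff, sum_add_distrib]
    simp only [f, pow_zero, thetaCoeff_zero]
    abel

theorem theta_mul_theta (hq : Function.Injective (q ^ · : ℕ → K)) (m r s : ℕ) :
    theta q (m + r) * theta q (m + s) =
      theta q m * ∑ n ∈ range (min r s + 1),
        C ((q ^ m) ^ n * thetaCoeff q r s n) * theta q (m + (r + s - n)) := by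
  have hvanish : ∀ n ∈ range (s + 1), n ∉ range (min r s + 1) →
      C ((q ^ m) ^ n * thetaCoeff q r s n) * scaledTheta q (q ^ m) (r + s - n) = 0 := by
    intro n hn hnr
    simp only [mem_range] at hn hnr
    simp [thetaCoeff_of_lt_left (show r < n by omega)]
  rw [theta_add, theta_add, mul_mul_mul_comm, scaledTheta_mul_scaledTheta hq,
    ← sum_subset (range_subset_range.2 (by omega)) hvanish, mul_assoc, mul_sum]
  congr 1
  refine sum_congr rfl fun n _ => ?_
  rw [theta_add, mul_left_comm]

theorem pow_mul_thetaCoeff_eq (hq : Function.Injective (q ^ · : ℕ → K)) (m r s n : ℕ) :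
    (q ^ m) ^ n * thetaCoeff q r s n =
      thetaEval q (q ^ (m + r)) (m + n) * thetaEval q (q ^ (m + s)) (m + n) /
        (q ^ (n * m) * thetaEval q (q ^ n) n *
          thetaEval q (q ^ (m + r)) m * thetaEval q (q ^ (m + s)) m) := by
  have hq0 : q ≠ 0 := ne_zero_of_injective_pow hq
  have hr : thetaEval q (q ^ (m + r)) m ≠ 0 := thetaEval_pow_ne_zero hq (by omega)
  have hs : thetaEval q (q ^ (m + s)) m ≠ 0 := thetaEval_pow_ne_zero hq (by omega)
  rw [thetaEval_add_pow, thetaEval_add_pow, thetaCoeff, ← pow_mul, mul_comm n m]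
  field_simp

end

/-- For `r ≥ m`, `s ≥ m`:
`θ_r(X)·θ_s(X) = θ_m(X)·Σ_{j=max(r,s)}^{r+s−m} c_{r,s}^{m,j}·θ_j(X)` where
`c_{r,s}^{m,j} = θ_{r+s−j}(q^r)·θ_{r+s−j}(q^s)
  / (q^{(r+s−j−m)m}·θ_{r+s−j−m}(q^{r+s−j−m})·θ_m(q^r)·θ_m(q^s))`. -/
theorem stmt17 {K : Type*} [Field K] [Algebra ℚ K] (q : K)
    (hq : Transcendental ℚ q) (m r s : ℕ) (hr : m ≤ r) (hs : m ≤ s) :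
    theta q r * theta q s =
      theta q m * ∑ j ∈ Finset.Icc (max r s) (r + s - m),
        C (thetaEval q (q ^ r) (r + s - j) * thetaEval q (q ^ s) (r + s - j) /
            (q ^ ((r + s - j - m) * m) *
              thetaEval q (q ^ (r + s - j - m)) (r + s - j - m) *
              thetaEval q (q ^ r) m * thetaEval q (q ^ s) m)) *
          theta q j := by
  obtain ⟨r, rfl⟩ := Nat.exists_eq_add_of_le hr
  obtain ⟨s, rfl⟩ := Nat.exists_eq_add_of_le hs
  rw [theta_mul_theta hq.pow_injective]
  congr 1
  refine sum_nbij' (fun n => m + (r + s - n)) (fun j => r + s + m - j) ?_ ?_ ?_ ?_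
    fun n hn => ?_
  any_goals (intro n hn; simp only [mem_range, mem_Icc] at hn ⊢; omega)
  have hj : m + r + (m + s) - (m + (r + s - n)) = m + n := by
    simp only [mem_range] at hn; omega
  rw [hj, Nat.add_sub_cancel_left, pow_mul_thetaCoeff_eq hq.pow_injective]
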